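/- arXiv:1603.08209 — 2 statements merged into one kernel-verified Lean document; each statement's English description precedes it below -/
import Mathlib

section
/- For every positive integer n, 27 n⁵ · √3 · arctan( 1/(√3 · (2n − 1)) ) = (3/2) · ∑_{k=0}^∞ (1/(−27n⁶)^k) · ( 9n⁴/(6k+1) + 9n³/(6k+2) + 6n²/(6k+3) + 3n/(6k+4) + 1/(6k+5) ). -/
/-! Writing `z = p e^{ix}` with `|p| < 1`, the imaginary part of `-log (1 - z) = ∑ z^k / k` is the
arctangent generator `∑ p^k sin (k x) / k = arctan (p sin x / (1 - p cos x))`. At `x = π / l`,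
grouping the terms by `k mod l` and using `sin (y + m π) = (-1)^m sin y` gives a BBP-type series of
base `-p^{-l}`. For `l = 6` and `p = √3 / (3 n)` the base is `-27 n⁶` and the arctangent argument
is `1 / (√3 (2 n - 1))`. -/

open Finset Real

theorem HasSum.sum_range_mul_add {α : Type*} [AddCommMonoid α] [TopologicalSpace α]
    [ContinuousAdd α] [RegularSpace α] {f : ℕ → α} {a : α} (hf : HasSum f a) (l : ℕ) [NeZero l] :
    HasSum (fun m ↦ ∑ j ∈ range l, f (l * m + j)) a := by
  have h := (Nat.divModEquiv l).symm.hasSum_iff.mpr hf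
  refine h.prod_fiberwise fun m ↦ ?_
  simpa [Fin.sum_univ_eq_sum_range (fun j ↦ f (l * m + j)), Nat.divModEquiv, mul_comm]
    using hasSum_fintype (fun j : Fin l ↦ f (l * m + j))

theorem Complex.arg_eq_arctan {z : ℂ} (hz : 0 < z.re) : arg z = Real.arctan (z.im / z.re) := by
  have h := abs_lt.mp (abs_arg_lt_pi_div_two_iff.mpr (Or.inl hz))
  rw [← tan_arg, Real.arctan_tan h.1 h.2]

theorem Real.hasSum_pow_mul_sin_div {p : ℝ} (hp : |p| < 1) (x : ℝ) :
    HasSum (fun k : ℕ ↦ p ^ k * sin (k * x) / k) (arctan (p * sin x / (1 - p * cos x))) := by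
  set z : ℂ := p * Complex.exp (x * Complex.I)
  have hz : ‖z‖ < 1 := by simpa [z, Complex.norm_exp_ofReal_mul_I] using hp
  have hre : 0 < 1 - p * cos x := by
    have : |p * cos x| < 1 := by
      rw [abs_mul]
      exact (mul_le_of_le_one_right (abs_nonneg p) (abs_cos_le_one x)).trans_lt hp
    linarith [le_abs_self (p * cos x)]
  have hterm (k : ℕ) : (z ^ k / k).im = p ^ k * sin (k * x) / k := by
    rw [Complex.div_natCast_im, mul_pow, ← Complex.exp_nat_mul, ← Complex.ofReal_pow,
      Complex.im_ofReal_mul, ← mul_assoc, ← Complex.ofReal_natCast, ← Complex.ofReal_mul,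
      Complex.exp_ofReal_mul_I_im]
  have hsum : (-Complex.log (1 - z)).im = arctan (p * sin x / (1 - p * cos x)) := by
    have h1 : (1 - z).re = 1 - p * cos x := by simp [z, Complex.exp_ofReal_mul_I_re]
    have h2 : (1 - z).im = -(p * sin x) := by simp [z, Complex.exp_ofReal_mul_I_im]
    rw [Complex.neg_im, Complex.log_im, Complex.arg_eq_arctan (h1 ▸ hre), h1, h2, neg_div,
      arctan_neg, neg_neg]
  simpa only [hterm, hsum] using Complex.hasSum_im (Complex.hasSum_taylorSeries_neg_log hz)

theorem Real.hasSum_bbp_of_arctan_pi_div {p : ℝ} (hp : |p| < 1) (l : ℕ) [NeZero l] :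
    HasSum (fun m : ℕ ↦ (-p ^ l) ^ m * ∑ j ∈ range l, p ^ j * sin (j * (π / l)) / (l * m + j))
      (arctan (p * sin (π / l) / (1 - p * cos (π / l)))) := by
  refine ((hasSum_pow_mul_sin_div hp (π / l)).sum_range_mul_add l).congr_fun fun m ↦ ?_
  rw [mul_sum]
  refine sum_congr rfl fun j _ ↦ ?_
  have hl : (l : ℝ) ≠ 0 := Nat.cast_ne_zero.mpr (NeZero.ne l)
  have hsin : sin (((l * m + j : ℕ) : ℝ) * (π / l)) = (-1) ^ m * sin (j * (π / l)) := by
    rw [← sin_add_nat_mul_pi]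
    congr 1
    push_cast
    field_simp
    ring
  rw [hsin, pow_add, pow_mul, neg_pow]
  push_cast
  ring

theorem Real.sum_range_six_pow_mul_sin_pi_div_six (p y : ℝ) :
    ∑ j ∈ range 6, p ^ j * sin (j * (π / 6)) / (y + j) =
      p / 2 / (y + 1) + √3 / 2 * p ^ 2 / (y + 2) + p ^ 3 / (y + 3)
        + √3 / 2 * p ^ 4 / (y + 4) + p ^ 5 / 2 / (y + 5) := by
  have h2 : sin (2 * (π / 6)) = √3 / 2 := by rw [← sin_pi_div_three]; ring_nf
  have h3 : sin (3 * (π / 6)) = 1 := by rw [← sin_pi_div_two]; ring_nf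
  have h4 : sin (4 * (π / 6)) = √3 / 2 := by rw [← sin_pi_div_three, ← sin_pi_sub]; ring_nf
  have h5 : sin (5 * (π / 6)) = 1 / 2 := by rw [← sin_pi_div_six, ← sin_pi_sub]; ring_nf
  simp only [sum_range_succ, sum_range_zero]
  push_cast
  rw [h2, h3, h4, h5, one_mul, sin_pi_div_six]
  simp only [zero_mul, sin_zero, mul_zero, zero_div, zero_add]
  ring

theorem Real.hasSum_bbp_arctan_inv_sqrt_three_mul {n : ℝ} (hn : 1 < 3 * n ^ 2) :
    HasSum (fun m : ℕ ↦ 3 / 2 * (1 / (-(27 * n ^ 6)) ^ m *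
        (9 * n ^ 4 / (6 * m + 1) + 9 * n ^ 3 / (6 * m + 2) + 6 * n ^ 2 / (6 * m + 3)
          + 3 * n / (6 * m + 4) + 1 / (6 * m + 5))))
      (27 * n ^ 5 * √3 * arctan (1 / (√3 * (2 * n - 1)))) := by
  have hs : √3 ^ 2 = 3 := sq_sqrt (by norm_num)
  have hn0 : n ≠ 0 := by rintro rfl; norm_num at hn
  have h2n : 2 * n - 1 ≠ 0 := by intro h; nlinarith
  set p : ℝ := √3 / (3 * n) with hp_def
  have hp2 : p ^ 2 = 1 / (3 * n ^ 2) := by rw [hp_def, div_pow, hs]; ring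
  have hp : |p| < 1 := by
    rw [← sq_lt_one_iff_abs_lt_one, hp2, div_lt_one (by positivity)]
    exact hn
  have harg : p * sin (π / 6) / (1 - p * cos (π / 6)) = 1 / (√3 * (2 * n - 1)) := by
    have hden : 1 - p * (√3 / 2) = (2 * n - 1) / (2 * n) := by
      rw [hp_def]; field_simp; linear_combination (-1 : ℝ) * hs
    rw [sin_pi_div_six, cos_pi_div_six, hden, hp_def]
    field_simp
    rw [hs]
  have hratio : (-(27 * n ^ 6))⁻¹ = -p ^ 6 := by
    rw [show p ^ 6 = (p ^ 2) ^ 3 by ring, hp2]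
    field_simp
    ring
  have H := (hasSum_bbp_of_arctan_pi_div hp 6).mul_left (27 * n ^ 5 * √3)
  simp only [Nat.cast_ofNat] at H
  rw [harg] at H
  refine H.congr_fun fun m ↦ ?_
  have hp3 : p ^ 3 = p / (3 * n ^ 2) := by rw [pow_succ, hp2]; ring
  have hp4 : p ^ 4 = 1 / (9 * n ^ 4) := by rw [show p ^ 4 = (p ^ 2) ^ 2 by ring, hp2]; ring
  have hp5 : p ^ 5 = p / (9 * n ^ 4) := by rw [pow_succ, hp4]; ring
  rw [sum_range_six_pow_mul_sin_pi_div_six, one_div, ← inv_pow, hratio]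
  generalize (-p ^ 6) ^ m = r
  rw [hp2, hp3, hp4, hp5, hp_def]
  field_simp
  rw [hs]
  ring

theorem stmt_10 (n : ℕ) (hn : 0 < n) :
    27 * (n : ℝ) ^ 5 * Real.sqrt 3 * Real.arctan (1 / (Real.sqrt 3 * (2 * (n : ℝ) - 1))) =
      (3 / 2) * ∑' k : ℕ, (1 / (-(27 * (n : ℝ) ^ 6)) ^ k) *
        (9 * (n : ℝ) ^ 4 / (6 * (k : ℝ) + 1) + 9 * (n : ℝ) ^ 3 / (6 * (k : ℝ) + 2)
          + 6 * (n : ℝ) ^ 2 / (6 * (k : ℝ) + 3) + 3 * (n : ℝ) / (6 * (k : ℝ) + 4)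
          + 1 / (6 * (k : ℝ) + 5)) := by
  have hn1 : (1 : ℝ) ≤ n := by exact_mod_cast hn
  rw [← tsum_mul_left]
  exact (hasSum_bbp_arctan_inv_sqrt_three_mul (by nlinarith)).tsum_eq.symm
end

section
/- For every integer n ≥ 2, n² · √n · arctan( √n/(n − 1) ) = ∑_{k=0}^∞ (1/(−n³)^k) · ( n²/(6k+1) + 2n/(6k+3) + 1/(6k+5) ). -/
/-!
With `s = √n > 1` one has `s / (s² - 1) = (s⁻¹ + s⁻³) / (1 - s⁻⁴)`, so the left side is
`s⁵ (arctan s⁻¹ + arctan s⁻³)`. Grouping the Gregory series of `arctan s⁻¹` in blocks of three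
terms and writing the series of `arctan s⁻³` with denominators `6k + 3` puts both on the common
ratio `-s⁻⁶ = 1 / (-n³)`; their sum is the stated series.
-/

theorem HasSum.sum_fin_blocks {α : Type*} [AddCommMonoid α] [TopologicalSpace α] [ContinuousAdd α]
    [RegularSpace α] {f : ℕ → α} {a : α} (h : HasSum f a) (k : ℕ) [NeZero k] :
    HasSum (fun m ↦ ∑ j : Fin k, f (m * k + j)) a :=
  ((Nat.divModEquiv k).symm.hasSum_iff.mpr h).prod_fiberwise fun _ ↦ hasSum_fintype _

namespace Real

theorem hasSum_arctan_six_blocks {y : ℝ} (hy : ‖y‖ < 1) :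
    HasSum (fun k : ℕ ↦ (-y ^ 6) ^ k *
      (y / (6 * k + 1) - y ^ 3 / (6 * k + 3) + y ^ 5 / (6 * k + 5))) (arctan y) := by
  convert (hasSum_arctan hy).sum_fin_blocks 3 using 2 with k
  have hsign (j : ℕ) : (-1 : ℝ) ^ (k * 3 + j) = (-1) ^ k * (-1) ^ j := by
    rw [pow_add, pow_mul']; norm_num
  simp only [Fin.sum_univ_three, Fin.val_zero, Fin.val_one, Fin.val_two, hsign]
  push_cast
  ring

theorem hasSum_arctan_cube {y : ℝ} (hy : ‖y‖ < 1) :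
    HasSum (fun k : ℕ ↦ (-y ^ 6) ^ k * (3 * y ^ 3 / (6 * k + 3))) (arctan (y ^ 3)) := by
  have hy3 : ‖y ^ 3‖ < 1 := by
    rw [norm_pow]; exact pow_lt_one₀ (norm_nonneg y) hy (by norm_num)
  convert hasSum_arctan hy3 using 2 with k
  have hk : (2 * k + 1 : ℝ) ≠ 0 := by positivity
  push_cast
  field_simp
  ring

theorem hasSum_arctan_add_arctan_cube {y : ℝ} (hy : ‖y‖ < 1) :
    HasSum (fun k : ℕ ↦ (-y ^ 6) ^ k *
      (y / (6 * k + 1) + 2 * y ^ 3 / (6 * k + 3) + y ^ 5 / (6 * k + 5)))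
      (arctan y + arctan (y ^ 3)) := by
  convert (hasSum_arctan_six_blocks hy).add (hasSum_arctan_cube hy) using 1
  ext k
  ring

theorem arctan_div_sq_sub_one {x : ℝ} (hx : 1 < x) :
    arctan (x / (x ^ 2 - 1)) = arctan x⁻¹ + arctan (x⁻¹ ^ 3) := by
  have hx0 : 0 < x := one_pos.trans hx
  have hprod : x⁻¹ * x⁻¹ ^ 3 < 1 := by
    rw [← pow_succ']
    exact pow_lt_one₀ (by positivity) (inv_lt_one_of_one_lt₀ hx) (by norm_num)
  rw [arctan_add hprod]
  congr 1
  have h1 : x ^ 2 - 1 ≠ 0 := by nlinarith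
  have h2 : x ^ 4 - 1 ≠ 0 := sub_ne_zero.mpr (one_lt_pow₀ hx four_ne_zero).ne'
  field_simp
  ring

end Real

theorem stmt_12 (n : ℕ) (hn : 2 ≤ n) :
    (n : ℝ) ^ 2 * Real.sqrt n * Real.arctan (Real.sqrt n / ((n : ℝ) - 1)) =
      ∑' k : ℕ, (1 / (-(n : ℝ) ^ 3) ^ k) *
        ((n : ℝ) ^ 2 / (6 * (k : ℝ) + 1) + 2 * (n : ℝ) / (6 * (k : ℝ) + 3)
          + 1 / (6 * (k : ℝ) + 5)) := by
  set s := √(n : ℝ)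
  have hs1 : 1 < s := Real.lt_sqrt (by norm_num) |>.mpr (by exact_mod_cast hn)
  have hs0 : s ≠ 0 := (one_pos.trans hs1).ne'
  have hsq : (n : ℝ) = s ^ 2 := (Real.sq_sqrt n.cast_nonneg).symm
  have hinv : ‖s⁻¹‖ < 1 := by
    rw [norm_inv, Real.norm_of_nonneg (one_pos.trans hs1).le]
    exact inv_lt_one_of_one_lt₀ hs1
  rw [hsq, Real.arctan_div_sq_sub_one hs1]
  refine (((Real.hasSum_arctan_add_arctan_cube hinv).mul_left ((s ^ 2) ^ 2 * s)).congr_fun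
    fun k ↦ ?_).tsum_eq.symm
  rw [show (-s⁻¹ ^ 6) ^ k = 1 / (-(s ^ 2) ^ 3) ^ k by
    rw [one_div, ← inv_pow, inv_neg, ← pow_mul, inv_pow]]
  field_simp
end
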